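/- arXiv:0904.3132 — 2 statements merged into one kernel-verified Lean document; each statement's English description precedes it below -/
import Mathlib

section
/- Explicit inverse of the multinomial Fisher-information square root: let d ≥ 1 and p ∈ ℝ^d with p_i > 0 for all i and p_0 := 1 − Σ_{i=1}^d p_i > 0, let P = diag(p), and set J := P^{1/2} − p pᵀ P^{-1/2}/(1 + √(1 − pᵀP^{-1}p)). Then J is invertible and J^{-1} = P^{-1/2} + P^{-1/2} p pᵀ P^{-1} / ( 1 − pᵀP^{-1}p + √(1 − pᵀP^{-1}p) ). -/
/-!
With `s = √(1 - ∑ pᵢ)`, `J` is the rank-one perturbation `P^{1/2} - (1 + s)⁻¹ p (√p)ᵀ` of the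
diagonal matrix `P^{1/2}` (note `pᵀP⁻¹p = ∑ pᵢ`). The Sherman–Morrison formula inverts it as
`P^{-1/2} + (1 - ∑ pᵢ + s)⁻¹ √p 𝟙ᵀ`, and `P^{-1/2} p pᵀ P⁻¹ = √p 𝟙ᵀ`.
-/

open Matrix
open scoped BigOperators

noncomputable section

/-- The candidate square root
`J = P^{1/2} − p pᵀ P^{-1/2}/(1 + √(1 − pᵀP⁻¹p))`
of the multinomial Fisher information `F = P − ppᵀ`, where `P = diag(p)`. -/
def multJ (d : ℕ) (p : Fin d → ℝ) : Matrix (Fin d) (Fin d) ℝ :=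
  Matrix.diagonal (fun i => Real.sqrt (p i)) -
    (1 + Real.sqrt (1 - dotProduct p ((Matrix.diagonal p)⁻¹.mulVec p)))⁻¹ •
      (Matrix.vecMulVec p p * (Matrix.diagonal fun i => Real.sqrt (p i))⁻¹)

namespace Matrix

variable {n α : Type*} [Fintype n] [DecidableEq n]

/-- The Sherman–Morrison formula, in right-inverse form. -/
theorem add_vecMulVec_mul_sub_eq_one [CommRing α] {A B : Matrix n n α} (hAB : A * B = 1)
    (u v : n → α) {c : α} (hc : c * (1 + v ⬝ᵥ B *ᵥ u) = 1) :
    (A + vecMulVec u v) * (B - c • vecMulVec (B *ᵥ u) (v ᵥ* B)) = 1 := by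
  have hsquare : vecMulVec u v * vecMulVec (B *ᵥ u) (v ᵥ* B) =
      (v ⬝ᵥ B *ᵥ u) • vecMulVec u (v ᵥ* B) := by
    rw [vecMulVec_mul_vecMulVec, vecMulVec_smul]
  calc (A + vecMulVec u v) * (B - c • vecMulVec (B *ᵥ u) (v ᵥ* B))
      = 1 + (1 - c * (1 + v ⬝ᵥ B *ᵥ u)) • vecMulVec u (v ᵥ* B) := by
        rw [add_mul, mul_sub, mul_sub, hAB, mul_smul_comm, mul_smul_comm, mul_vecMulVec,
          mulVec_mulVec, hAB, one_mulVec, vecMulVec_mul, hsquare]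
        module
    _ = 1 := by rw [hc, sub_self, zero_smul, add_zero]

theorem inv_diagonal_of_ne_zero [Field α] {v : n → α} (hv : ∀ i, v i ≠ 0) :
    (diagonal v)⁻¹ = diagonal v⁻¹ :=
  inv_eq_right_inv <| by
    rw [diagonal_mul_diagonal, ← diagonal_one]
    exact congrArg diagonal (funext fun i => mul_inv_cancel₀ (hv i))

theorem dotProduct_inv_diagonal_mulVec_self [Field α] {v : n → α} (hv : ∀ i, v i ≠ 0) :
    v ⬝ᵥ (diagonal v)⁻¹ *ᵥ v = ∑ i, v i := by
  rw [inv_diagonal_of_ne_zero hv]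
  exact Finset.sum_congr rfl fun i _ => by simp [mulVec_diagonal, hv i]

end Matrix

section SqrtDiagonal

variable {n : Type*} [Fintype n]

theorem sqrt_dotProduct_sqrt {p : n → ℝ} (hp : ∀ i, 0 ≤ p i) :
    (fun i => √(p i)) ⬝ᵥ (fun i => √(p i)) = ∑ i, p i :=
  Finset.sum_congr rfl fun i _ => Real.mul_self_sqrt (hp i)

variable [DecidableEq n]

theorem inv_diagonal_sqrt_mulVec (p : n → ℝ) :
    (diagonal fun i => (√(p i))⁻¹) *ᵥ p = fun i => √(p i) := by
  ext i
  rw [mulVec_diagonal, inv_mul_eq_div, Real.div_sqrt]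

theorem vecMul_inv_diagonal_sqrt (p : n → ℝ) :
    p ᵥ* (diagonal fun i => (√(p i))⁻¹) = fun i => √(p i) := by
  ext i
  rw [vecMul_diagonal, ← div_eq_mul_inv, Real.div_sqrt]

theorem sqrt_vecMul_inv_diagonal_sqrt {p : n → ℝ} (hp : ∀ i, 0 < p i) :
    (fun i => √(p i)) ᵥ* (diagonal fun i => (√(p i))⁻¹) = 1 := by
  ext i
  rw [vecMul_diagonal, mul_inv_cancel₀ (Real.sqrt_pos.2 (hp i)).ne', Pi.one_apply]

theorem diagonal_sqrt_mul_inv_diagonal_sqrt {p : n → ℝ} (hp : ∀ i, 0 < p i) :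
    (diagonal fun i => √(p i)) * (diagonal fun i => (√(p i))⁻¹) = 1 := by
  rw [diagonal_mul_diagonal, ← diagonal_one]
  exact congrArg diagonal (funext fun i => mul_inv_cancel₀ (Real.sqrt_pos.2 (hp i)).ne')

theorem inv_diagonal_sqrt_mul_vecMulVec_mul_inv_diagonal {p : n → ℝ} (hp : ∀ i, 0 < p i) :
    (diagonal fun i => √(p i))⁻¹ * vecMulVec p p * (diagonal p)⁻¹ =
      vecMulVec (fun i => √(p i)) 1 := by
  rw [inv_diagonal_of_ne_zero fun i => (Real.sqrt_pos.2 (hp i)).ne',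
    inv_diagonal_of_ne_zero fun i => (hp i).ne', mul_vecMulVec, vecMulVec_mul, Pi.inv_def,
    inv_diagonal_sqrt_mulVec]
  congr
  ext i
  rw [vecMul_diagonal, Pi.inv_apply, mul_inv_cancel₀ (hp i).ne', Pi.one_apply]

end SqrtDiagonal

theorem multJ_eq_diagonal_add_vecMulVec {d : ℕ} {p : Fin d → ℝ} (hp : ∀ i, 0 < p i) :
    multJ d p = diagonal (fun i => √(p i)) +
      vecMulVec p (-(1 + √(1 - ∑ i, p i))⁻¹ • fun i => √(p i)) := by
  rw [multJ, dotProduct_inv_diagonal_mulVec_self fun i => (hp i).ne',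
    inv_diagonal_of_ne_zero fun i => (Real.sqrt_pos.2 (hp i)).ne', vecMulVec_mul, Pi.inv_def,
    vecMul_inv_diagonal_sqrt, vecMulVec_smul, neg_smul, ← sub_eq_add_neg]

theorem multinomial_fisher_sqrt_inverse_general (d : ℕ) (p : Fin d → ℝ)
    (hp : ∀ i, 0 < p i) (hp0 : 0 < 1 - ∑ i, p i) :
    IsUnit (multJ d p) ∧
      (multJ d p)⁻¹ =
        (Matrix.diagonal fun i => Real.sqrt (p i))⁻¹ +
          (1 - dotProduct p ((Matrix.diagonal p)⁻¹.mulVec p) +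
              Real.sqrt (1 - dotProduct p ((Matrix.diagonal p)⁻¹.mulVec p)))⁻¹ •
            ((Matrix.diagonal fun i => Real.sqrt (p i))⁻¹ * Matrix.vecMulVec p p *
              (Matrix.diagonal p)⁻¹) := by
  rw [dotProduct_inv_diagonal_mulVec_self fun i => (hp i).ne',
    inv_diagonal_sqrt_mul_vecMulVec_mul_inv_diagonal hp,
    inv_diagonal_of_ne_zero fun i => (Real.sqrt_pos.2 (hp i)).ne', Pi.inv_def]
  set t := ∑ i, p i with ht
  set s := √(1 - t)
  have hs : 0 < 1 + s := by positivity
  have hst : 0 < 1 - t + s := by linarith [Real.sqrt_nonneg (1 - t)]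
  have hc : ((1 + s) * (1 - t + s)⁻¹) *
      (1 + (-(1 + s)⁻¹ • fun i => √(p i)) ⬝ᵥ (diagonal fun i => (√(p i))⁻¹) *ᵥ p) = 1 := by
    rw [inv_diagonal_sqrt_mulVec, smul_dotProduct, sqrt_dotProduct_sqrt fun i => (hp i).le, ← ht,
      smul_eq_mul]
    field_simp
    ring
  have hcoef : (1 + s) * (1 - t + s)⁻¹ * (1 + s)⁻¹ = (1 - t + s)⁻¹ := by
    field_simp
  have hJB := add_vecMulVec_mul_sub_eq_one (diagonal_sqrt_mul_inv_diagonal_sqrt hp) _ _ hc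
  rw [← multJ_eq_diagonal_add_vecMulVec hp, inv_diagonal_sqrt_mulVec, smul_vecMul,
    sqrt_vecMul_inv_diagonal_sqrt hp, vecMulVec_smul, smul_smul, mul_neg, neg_smul,
    sub_neg_eq_add, hcoef] at hJB
  exact ⟨(isUnit_iff_isUnit_det _).2 (isUnit_det_of_right_inverse hJB), inv_eq_right_inv hJB⟩

/-- **Theorem (Statement 16).** Explicit inverse of the multinomial Fisher-information
square root: if `p_i > 0` for all `i` and `p₀ = 1 − Σ p_i > 0`, then
`J = P^{1/2} − p pᵀ P^{-1/2}/(1 + √(1 − pᵀP⁻¹p))` is invertible and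
`J⁻¹ = P^{-1/2} + P^{-1/2} p pᵀ P^{-1}/(1 − pᵀP⁻¹p + √(1 − pᵀP⁻¹p))`. -/
theorem multinomial_fisher_sqrt_inverse (d : ℕ) (hd : 1 ≤ d) (p : Fin d → ℝ)
    (hp : ∀ i, 0 < p i) (hp0 : 0 < 1 - ∑ i, p i) :
    IsUnit (multJ d p) ∧
      (multJ d p)⁻¹ =
        (Matrix.diagonal fun i => Real.sqrt (p i))⁻¹ +
          (1 - dotProduct p ((Matrix.diagonal p)⁻¹.mulVec p) +
              Real.sqrt (1 - dotProduct p ((Matrix.diagonal p)⁻¹.mulVec p)))⁻¹ •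
            ((Matrix.diagonal fun i => Real.sqrt (p i))⁻¹ * Matrix.vecMulVec p p *
              (Matrix.diagonal p)⁻¹) :=
  multinomial_fisher_sqrt_inverse_general d p hp hp0
end
end

section
/- Identifiability lower bound for the seemingly-unrelated-regressions parametrization: let λ > 0 and M ≥ 1 with λ/(4M) ≤ 1/4. Let A_0 and A be real d×d matrices such that the smallest singular value of A_0 is at least λ, and let B_0 and B be real m×d matrices with operator norm ‖B‖ ≤ M. Then max{ ‖A − A_0‖_F , ‖BA − B_0A_0‖_F } ≥ (λ/(4M)) · √( ‖A − A_0‖_F² + ‖B − B_0‖_F² ). In particular, the curved-exponential map η = (η_1, η_2) ↦ (η_1, η_2η_1) satisfies Assumption B with ε_0 = λ/(4M) on the set where the smallest singular value of η_{01} is at least λ and ‖η_2‖ ≤ M. -/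
open Matrix
open scoped BigOperators InnerProductSpace

noncomputable section

/-- The Frobenius norm of a real matrix. -/
def frobNorm {m n : ℕ} (A : Matrix (Fin m) (Fin n) ℝ) : ℝ :=
  Real.sqrt (∑ i, ∑ j, A i j ^ 2)

/-!
Write `a = ‖A - A₀‖_F`, `b = ‖B - B₀‖_F` and `c` for the maximum. Since
`(B - B₀) A₀ = (B A - B₀ A₀) - B (A - A₀)`, and the lower bound `λ` on the singular values of
`A₀` transfers to `A₀ᵀ`, which acts on the rows of `B - B₀`, we get
`λ b ≤ ‖(B - B₀) A₀‖_F ≤ c + M a ≤ 2 M c`. Hence `√(a² + b²) ≤ a + b ≤ c + 2 M c / λ`, and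
multiplying by `λ / (4M) ≤ 1/4` gives at most `c/4 + c/2`.
-/

theorem LinearMap.mul_norm_le_norm_adjoint_apply {𝕜 E : Type*} [RCLike 𝕜]
    [NormedAddCommGroup E] [InnerProductSpace 𝕜 E] [FiniteDimensional 𝕜 E]
    {T : E →ₗ[𝕜] E} {lam : ℝ} (hlam : 0 < lam) (hT : ∀ x, lam * ‖x‖ ≤ ‖T x‖) (x : E) :
    lam * ‖x‖ ≤ ‖T.adjoint x‖ := by
  have hinj : Function.Injective T := by
    refine (injective_iff_map_eq_zero T).mpr fun y hy => norm_le_zero_iff.mp ?_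
    have := hT y
    rw [hy, norm_zero] at this
    exact nonpos_of_mul_nonpos_right this hlam
  obtain ⟨y, rfl⟩ := LinearMap.injective_iff_surjective.mp hinj x
  rcases eq_or_ne (T y) 0 with hTy | hTy
  · simp [hTy]
  have hsq : ‖T y‖ ^ 2 ≤ ‖T.adjoint (T y)‖ * ‖y‖ := by
    calc ‖T y‖ ^ 2 = ‖⟪T.adjoint (T y), y⟫_𝕜‖ := by
          rw [LinearMap.adjoint_inner_left, inner_self_eq_norm_sq_to_K]; simp
      _ ≤ ‖T.adjoint (T y)‖ * ‖y‖ := norm_inner_le_norm _ _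
  refine le_of_mul_le_mul_right ?_ (norm_pos_iff.mpr hTy)
  nlinarith [hT y, norm_nonneg (T.adjoint (T y))]

theorem Matrix.mul_norm_le_norm_toEuclideanLin_transpose {n : Type*} [Fintype n] [DecidableEq n]
    {A : Matrix n n ℝ} {lam : ℝ} (hlam : 0 < lam)
    (hA : ∀ x, lam * ‖x‖ ≤ ‖toEuclideanLin A x‖) (x : EuclideanSpace ℝ n) :
    lam * ‖x‖ ≤ ‖toEuclideanLin Aᵀ x‖ := by
  rw [← conjTranspose_eq_transpose_of_trivial, toEuclideanLin_conjTranspose_eq_adjoint]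
  exact LinearMap.mul_norm_le_norm_adjoint_apply hlam hA x

section frobNorm

attribute [local instance] Matrix.frobeniusNormedAddCommGroup

variable {l m n : ℕ}

theorem frobNorm_eq_norm (A : Matrix (Fin m) (Fin n) ℝ) : frobNorm A = ‖A‖ := by
  simp [frobNorm, frobenius_norm_def, Real.sqrt_eq_rpow, Real.norm_eq_abs, sq_abs]

theorem frobNorm_nonneg (A : Matrix (Fin m) (Fin n) ℝ) : 0 ≤ frobNorm A :=
  Real.sqrt_nonneg _

theorem frobNorm_sub_le (A B : Matrix (Fin m) (Fin n) ℝ) :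
    frobNorm (A - B) ≤ frobNorm A + frobNorm B := by
  simpa only [frobNorm_eq_norm] using norm_sub_le A B

theorem frobNorm_transpose (A : Matrix (Fin m) (Fin n) ℝ) : frobNorm Aᵀ = frobNorm A := by
  simp only [frobNorm_eq_norm, frobenius_norm_transpose]

theorem frobNorm_sq_eq_sum_col (A : Matrix (Fin m) (Fin n) ℝ) :
    frobNorm A ^ 2 = ∑ j, ‖(WithLp.toLp 2 (Aᵀ j) : EuclideanSpace ℝ (Fin m))‖ ^ 2 := by
  rw [frobNorm, Real.sq_sqrt (by positivity), Finset.sum_comm]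
  simp [EuclideanSpace.real_norm_sq_eq]

theorem mul_frobNorm_le_mul_frobNorm_of_col {C : Matrix (Fin m) (Fin l) ℝ}
    {D : Matrix (Fin n) (Fin l) ℝ} {a b : ℝ} (ha : 0 ≤ a) (hb : 0 ≤ b)
    (h : ∀ j, a * ‖(WithLp.toLp 2 (Cᵀ j) : EuclideanSpace ℝ (Fin m))‖ ≤
      b * ‖(WithLp.toLp 2 (Dᵀ j) : EuclideanSpace ℝ (Fin n))‖) :
    a * frobNorm C ≤ b * frobNorm D := by
  refine le_of_pow_le_pow_left₀ two_ne_zero (mul_nonneg hb (frobNorm_nonneg D)) ?_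
  rw [mul_pow, mul_pow, frobNorm_sq_eq_sum_col, frobNorm_sq_eq_sum_col, Finset.mul_sum,
    Finset.mul_sum]
  refine Finset.sum_le_sum fun j _ => ?_
  rw [← mul_pow, ← mul_pow]
  exact pow_le_pow_left₀ (by positivity) (h j) 2

theorem toLp_transpose_mul_apply (A : Matrix (Fin m) (Fin n) ℝ) (C : Matrix (Fin n) (Fin l) ℝ)
    (j : Fin l) :
    (WithLp.toLp 2 ((A * C)ᵀ j) : EuclideanSpace ℝ (Fin m)) =
      toEuclideanLin A (WithLp.toLp 2 (Cᵀ j)) :=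
  rfl

theorem frobNorm_mul_le {M : ℝ} (hM : 0 ≤ M) {B : Matrix (Fin m) (Fin n) ℝ}
    (hB : ∀ x, ‖toEuclideanLin B x‖ ≤ M * ‖x‖) (C : Matrix (Fin n) (Fin l) ℝ) :
    frobNorm (B * C) ≤ M * frobNorm C := by
  simpa only [one_mul] using mul_frobNorm_le_mul_frobNorm_of_col zero_le_one hM fun j => by
    simpa only [one_mul, toLp_transpose_mul_apply] using hB _

theorem mul_frobNorm_le_frobNorm_mul {lam : ℝ} (hlam : 0 ≤ lam) {A : Matrix (Fin m) (Fin n) ℝ}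
    (hA : ∀ x, lam * ‖x‖ ≤ ‖toEuclideanLin A x‖) (C : Matrix (Fin n) (Fin l) ℝ) :
    lam * frobNorm C ≤ frobNorm (A * C) := by
  simpa only [one_mul] using mul_frobNorm_le_mul_frobNorm_of_col hlam zero_le_one fun j => by
    simpa only [one_mul, toLp_transpose_mul_apply] using hA _

end frobNorm

theorem div_mul_sqrt_sq_add_sq_le {lam M a b c : ℝ} (hlam : 0 < lam) (hM : 0 < M)
    (hlM : lam / (4 * M) ≤ 1 / 4) (ha : 0 ≤ a) (hb : 0 ≤ b) (hac : a ≤ c)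
    (hbc : lam * b ≤ 2 * M * c) :
    lam / (4 * M) * Real.sqrt (a ^ 2 + b ^ 2) ≤ c := by
  have hsqrt : Real.sqrt (a ^ 2 + b ^ 2) ≤ a + b := by
    rw [Real.sqrt_le_left (by positivity)]
    nlinarith
  calc lam / (4 * M) * Real.sqrt (a ^ 2 + b ^ 2)
      ≤ lam / (4 * M) * a + lam * b / (4 * M) := by
        rw [mul_div_right_comm, ← mul_add]; gcongr
    _ ≤ 1 / 4 * c + 2 * M * c / (4 * M) :=
        add_le_add (mul_le_mul hlM hac ha (by norm_num)) (by gcongr)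
    _ ≤ c := by
        rw [show 2 * M * c / (4 * M) = c / 2 by field_simp; ring]
        linarith [ha.trans hac]

/-- **Theorem (Statement 17).** Identifiability lower bound for the
seemingly-unrelated-regressions parametrization: if `λ > 0`, `M ≥ 1`, `λ/(4M) ≤ 1/4`,
the smallest singular value of `A₀` is at least `λ`, and `‖B‖ ≤ M` in operator norm, then
`max{‖A − A₀‖_F, ‖BA − B₀A₀‖_F} ≥ (λ/(4M))·√(‖A − A₀‖_F² + ‖B − B₀‖_F²)`.
(Hence the curved-exponential map `(η₁, η₂) ↦ (η₁, η₂η₁)` satisfies Assumption B with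
`ε₀ = λ/(4M)`.) -/
theorem sur_identifiability_lower_bound (d m : ℕ) (lam M : ℝ)
    (hlam : 0 < lam) (hM : 1 ≤ M) (hlM : lam / (4 * M) ≤ 1 / 4)
    (A₀ A : Matrix (Fin d) (Fin d) ℝ) (B₀ B : Matrix (Fin m) (Fin d) ℝ)
    -- the smallest singular value of A₀ is at least λ
    (hA₀ : ∀ x : EuclideanSpace ℝ (Fin d), lam * ‖x‖ ≤ ‖Matrix.toEuclideanLin A₀ x‖)
    -- ‖B‖ ≤ M in operator norm
    (hB : ∀ x : EuclideanSpace ℝ (Fin d), ‖Matrix.toEuclideanLin B x‖ ≤ M * ‖x‖) :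
    lam / (4 * M) * Real.sqrt (frobNorm (A - A₀) ^ 2 + frobNorm (B - B₀) ^ 2) ≤
      max (frobNorm (A - A₀)) (frobNorm (B * A - B₀ * A₀)) := by
  have hM0 : 0 < M := by linarith
  have hrow : lam * frobNorm (B - B₀) ≤ frobNorm ((B - B₀) * A₀) := by
    rw [← frobNorm_transpose ((B - B₀) * A₀), transpose_mul, ← frobNorm_transpose (B - B₀)]
    exact mul_frobNorm_le_frobNorm_mul hlam.le
      (mul_norm_le_norm_toEuclideanLin_transpose hlam hA₀) _
  have hdec : (B - B₀) * A₀ = (B * A - B₀ * A₀) - B * (A - A₀) := by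
    simp only [Matrix.sub_mul, Matrix.mul_sub]; abel
  set a := frobNorm (A - A₀)
  set c := max a (frobNorm (B * A - B₀ * A₀))
  have ha : 0 ≤ a := frobNorm_nonneg _
  have hac : a ≤ c := le_max_left _ _
  refine div_mul_sqrt_sq_add_sq_le hlam hM0 hlM ha (frobNorm_nonneg _) hac ?_
  calc lam * frobNorm (B - B₀)
      ≤ frobNorm (B * A - B₀ * A₀) + frobNorm (B * (A - A₀)) :=
        hrow.trans (hdec ▸ frobNorm_sub_le _ _)
    _ ≤ c + M * a := add_le_add (le_max_right _ _) (frobNorm_mul_le hM0.le hB _)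
    _ ≤ 2 * M * c := by nlinarith
end
end
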